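/- arXiv:1307.0648 — 2 statements merged into one kernel-verified Lean document; each statement's English description precedes it below -/
import Mathlib

section
/- Let q ≥ 2 and k ≥ 1 be integers, and for a natural number a define D(a) to be the minimal value of S = Σ_{i=0}^{k-1} a_i + Σ_{i=0}^{k-1} b_i over all tuples of natural numbers (a_i), (b_i) such that a ≡ Σ_{i=0}^{k-1} a_i q^i − Σ_{i=0}^{k-1} b_i q^i (mod q^k − 1). Then for every natural number d, D((q−1)·d) ≤ 2·D(d). -/
/-!
If `d ≡ ∑ Aᵢ qⁱ - ∑ Bᵢ qⁱ` is an optimal representation, then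
`(q - 1) d ≡ (q ∑ Aᵢ qⁱ + ∑ Bᵢ qⁱ) - (q ∑ Bᵢ qⁱ + ∑ Aᵢ qⁱ)`. Because `q ^ k ≡ 1`, multiplying a
digit vector's value by `q` just rotates its digits cyclically, which keeps the digit sum, so this
is a representation of `(q - 1) d` of weight `2 D(d)`.
-/

/-- `D q k a` is the minimal total weight `∑ aᵢ + ∑ bᵢ` over signed base-`q`
representations `a ≡ ∑ aᵢ qⁱ - ∑ bᵢ qⁱ (mod q^k - 1)` with nonnegative integer digits. -/
noncomputable def D (q k a : ℕ) : ℕ :=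
  sInf {S : ℕ | ∃ A B : Fin k → ℕ, S = (∑ i, A i) + (∑ i, B i) ∧
    (a : ZMod (q ^ k - 1)) =
      (∑ i : Fin k, (A i : ZMod (q ^ k - 1)) * (q : ZMod (q ^ k - 1)) ^ (i : ℕ)) -
        ∑ i : Fin k, (B i : ZMod (q ^ k - 1)) * (q : ZMod (q ^ k - 1)) ^ (i : ℕ)}

theorem Finset.sum_mul_pow_finRotate_symm {R : Type*} [CommSemiring R] {x : R} {k : ℕ}
    (hx : x ^ k = 1) (f : Fin k → R) :
    ∑ i, f ((finRotate k).symm i) * x ^ (i : ℕ) = x * ∑ i, f i * x ^ (i : ℕ) := by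
  rw [← Equiv.sum_comp (finRotate k), Finset.mul_sum]
  refine Finset.sum_congr rfl fun i _ => ?_
  cases k with
  | zero => exact i.elim0
  | succ n =>
    rw [Equiv.symm_apply_apply, coe_finRotate, mul_left_comm]
    split_ifs with h
    · rw [h, Fin.val_last, ← pow_succ', hx, pow_zero]
    · rw [pow_succ']

theorem ZMod.natCast_self_eq_one {n : ℕ} (hn : 1 ≤ n) : (n : ZMod (n - 1)) = 1 := by
  rw [← Nat.sub_add_cancel hn, Nat.cast_add, ZMod.natCast_self, Nat.cast_one, zero_add,
    Nat.add_sub_cancel]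

def digitValue (q k : ℕ) (A : Fin k → ℕ) : ZMod (q ^ k - 1) :=
  ∑ i, (A i : ZMod (q ^ k - 1)) * (q : ZMod (q ^ k - 1)) ^ (i : ℕ)

theorem digitValue_add (q k : ℕ) (A B : Fin k → ℕ) :
    digitValue q k (A + B) = digitValue q k A + digitValue q k B := by
  simp only [digitValue, Pi.add_apply, Nat.cast_add, add_mul, Finset.sum_add_distrib]

theorem digitValue_comp_finRotate_symm {q : ℕ} (hq : 1 ≤ q) (k : ℕ) (A : Fin k → ℕ) :
    digitValue q k (A ∘ (finRotate k).symm) = q * digitValue q k A := by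
  have hqk : (q : ZMod (q ^ k - 1)) ^ k = 1 := by
    rw [← Nat.cast_pow, ZMod.natCast_self_eq_one (Nat.one_le_pow _ _ hq)]
  exact Finset.sum_mul_pow_finRotate_symm hqk fun i => (A i : ZMod (q ^ k - 1))

theorem D_le_of_eq {q k a : ℕ} (A B : Fin k → ℕ)
    (h : (a : ZMod (q ^ k - 1)) = digitValue q k A - digitValue q k B) :
    D q k a ≤ (∑ i, A i) + ∑ i, B i :=
  Nat.sInf_le ⟨A, B, rfl, h⟩

theorem exists_D_eq (q : ℕ) {k : ℕ} (hk : 1 ≤ k) (a : ℕ) :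
    ∃ A B : Fin k → ℕ, D q k a = (∑ i, A i) + (∑ i, B i) ∧
      (a : ZMod (q ^ k - 1)) = digitValue q k A - digitValue q k B :=
  Nat.sInf_mem (s := {S | ∃ A B : Fin k → ℕ, S = (∑ i, A i) + (∑ i, B i) ∧
      (a : ZMod (q ^ k - 1)) = digitValue q k A - digitValue q k B}) ⟨a, Pi.single ⟨0, hk⟩ a, 0, by simp, by simp [digitValue, Pi.single_apply]⟩

theorem D_q_sub_one_mul_le (q k : ℕ) (hq : 2 ≤ q) (hk : 1 ≤ k) (d : ℕ) :
    D q k ((q - 1) * d) ≤ 2 * D q k d := by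
  obtain ⟨A, B, hD, hd⟩ := exists_D_eq q hk d
  calc D q k ((q - 1) * d)
      ≤ (∑ i, (A ∘ (finRotate k).symm + B) i) + ∑ i, (B ∘ (finRotate k).symm + A) i := by
        refine D_le_of_eq _ _ ?_
        simp only [digitValue_add, digitValue_comp_finRotate_symm (by omega : 1 ≤ q),
          Nat.cast_mul, Nat.cast_sub (by omega : 1 ≤ q), hd]
        ring
    _ = 2 * D q k d := by
        simp only [Pi.add_apply, Finset.sum_add_distrib, Function.comp_apply,
          Equiv.sum_comp, hD]
        ring
end

section
/- Let H₁, H₂ be additive groups and H_r a multiplicative group, all of prime order r, and let e₁, e₂ : H₁ × H₂ → H_r be non-degenerate bilinear pairings (for each fixed non-identity element of one argument, the induced map in the other argument is a group isomorphism onto H_r). Suppose we can invert each pairing in its first and second arguments. Then given Y, [A]Y, [B]Y ∈ H₁ with Y ≠ 0, the element [AB]Y is determined; formally: fix any non-identity U ∈ H₂, let z = e₁([A]Y, U), let V ∈ H₂ be the unique element with e₁(Y, V) = z, let w = e₂([B]Y, V), and let W ∈ H₁ be the unique element with e₂(W, U) = w. Then W = [A·B]Y. -/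
/-!
Bilinearity lets a scalar move between the two slots of a pairing, `e([n]P, Q) = e(P, [n]Q)`.
Hence `e₁(Y, V) = e₁([A]Y, U) = e₁(Y, [A]U)`, so `V = [A]U` by injectivity of `e₁(Y, ·)`; then
`e₂(W, U) = e₂([B]Y, [A]U) = e₂([A]([B]Y), U)`, so `W = [AB]Y` by injectivity of `e₂(·, U)`.
-/

open Function

theorem map_zsmul_of_map_add {M G : Type*} [AddGroup M] [Group G] (f : M → G)
    (hf : ∀ x y, f (x + y) = f x * f y) (n : ℤ) (x : M) : f (n • x) = f x ^ n :=
  map_zsmul (AddMonoidHom.mk' (fun x => Additive.ofMul (f x)) hf) n x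

section Pairing

variable {M N G : Type*} [AddGroup M] [AddGroup N] [Group G] {e : M → N → G}

theorem pairing_zsmul_left_eq_zsmul_right (hl : ∀ x y u, e (x + y) u = e x u * e y u)
    (hr : ∀ x u v, e x (u + v) = e x u * e x v) (n : ℤ) (x : M) (u : N) :
    e (n • x) u = e x (n • u) := by
  rw [map_zsmul_of_map_add (e · u) (hl · · u), map_zsmul_of_map_add (e x) (hr x)]

theorem right_eq_zsmul_of_pairing_eq (hl : ∀ x y u, e (x + y) u = e x u * e y u)
    (hr : ∀ x u v, e x (u + v) = e x u * e x v) {n : ℤ} {x : M} {u v : N}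
    (hinj : Injective (e x)) (h : e x v = e (n • x) u) : v = n • u :=
  hinj (h.trans (pairing_zsmul_left_eq_zsmul_right hl hr n x u))

theorem left_eq_zsmul_of_pairing_eq (hl : ∀ x y u, e (x + y) u = e x u * e y u)
    (hr : ∀ x u v, e x (u + v) = e x u * e x v) {n : ℤ} {x y : M} {u : N}
    (hinj : Injective (e · u)) (h : e y u = e x (n • u)) : y = n • x :=
  hinj (h.trans (pairing_zsmul_left_eq_zsmul_right hl hr n x u).symm)

end Pairing

theorem diffie_hellman_via_pairing_inversion_general
    {H₁ H₂ Hr : Type*} [AddCommGroup H₁] [AddCommGroup H₂] [CommGroup Hr]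
    (e₁ e₂ : H₁ → H₂ → Hr)
    -- bilinearity of e₁ and e₂
    (he₁l : ∀ x y u, e₁ (x + y) u = e₁ x u * e₁ y u)
    (he₁r : ∀ x u v, e₁ x (u + v) = e₁ x u * e₁ x v)
    (he₂l : ∀ x y u, e₂ (x + y) u = e₂ x u * e₂ y u)
    (he₂r : ∀ x u v, e₂ x (u + v) = e₂ x u * e₂ x v)
    -- non-degeneracy: fixing a non-identity element in one slot gives an isomorphism
    (hnd₁l : ∀ P : H₁, P ≠ 0 → Function.Bijective (fun Q => e₁ P Q))
    (hnd₂r : ∀ Q : H₂, Q ≠ 0 → Function.Bijective (fun P => e₂ P Q))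
    (A B : ℤ) (Y : H₁) (hY : Y ≠ 0) (U : H₂) (hU : U ≠ 0)
    (V : H₂) (hV : e₁ Y V = e₁ (A • Y) U)
    (W : H₁) (hW : e₂ W U = e₂ (B • Y) V) :
    W = (A * B) • Y := by
  have hVA : V = A • U := right_eq_zsmul_of_pairing_eq he₁l he₁r (hnd₁l Y hY).injective hV
  have hWAB : W = A • B • Y :=
    left_eq_zsmul_of_pairing_eq he₂l he₂r (hnd₂r U hU).injective (hVA ▸ hW)
  rw [hWAB, mul_smul]

/-- Solving the Diffie–Hellman problem via two pairing inversions: with `V` obtained by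
inverting `e₁(Y, ·)` at `e₁([A]Y, U)` and `W` obtained by inverting `e₂(·, U)` at
`e₂([B]Y, V)`, one has `W = [A·B]Y`. -/
theorem diffie_hellman_via_pairing_inversion
    {H₁ H₂ Hr : Type*} [AddCommGroup H₁] [AddCommGroup H₂] [CommGroup Hr]
    (r : ℕ) (hr : r.Prime)
    (hcard₁ : Nat.card H₁ = r) (hcard₂ : Nat.card H₂ = r) (hcardr : Nat.card Hr = r)
    (e₁ e₂ : H₁ → H₂ → Hr)
    -- bilinearity of e₁ and e₂
    (he₁l : ∀ x y u, e₁ (x + y) u = e₁ x u * e₁ y u)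
    (he₁r : ∀ x u v, e₁ x (u + v) = e₁ x u * e₁ x v)
    (he₂l : ∀ x y u, e₂ (x + y) u = e₂ x u * e₂ y u)
    (he₂r : ∀ x u v, e₂ x (u + v) = e₂ x u * e₂ x v)
    -- non-degeneracy: fixing a non-identity element in one slot gives an isomorphism
    (hnd₁l : ∀ P : H₁, P ≠ 0 → Function.Bijective (fun Q => e₁ P Q))
    (hnd₁r : ∀ Q : H₂, Q ≠ 0 → Function.Bijective (fun P => e₁ P Q))
    (hnd₂l : ∀ P : H₁, P ≠ 0 → Function.Bijective (fun Q => e₂ P Q))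
    (hnd₂r : ∀ Q : H₂, Q ≠ 0 → Function.Bijective (fun P => e₂ P Q))
    (A B : ℤ) (Y : H₁) (hY : Y ≠ 0) (U : H₂) (hU : U ≠ 0)
    (V : H₂) (hV : e₁ Y V = e₁ (A • Y) U)
    (W : H₁) (hW : e₂ W U = e₂ (B • Y) V) :
    W = (A * B) • Y :=
  diffie_hellman_via_pairing_inversion_general e₁ e₂ he₁l he₁r he₂l he₂r hnd₁l hnd₂r A B Y hY U hU V
    hV W hW
end
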